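/- For every 1/2 < F < 1 and every target F_t < 1, there exists N ∈ ℕ such that the N-th iterate gᴺ(F) ≥ F_t, where g(F) = (10F² − 2F + 1)/(8F² − 4F + 5). -/

import Mathlib

noncomputable def g (F : ℝ) : ℝ := (10 * F ^ 2 - 2 * F + 1) / (8 * F ^ 2 - 4 * F + 5)

/-!
On `[1/2, 1)` the map `g` moves points up but stays below its fixed point `1`, because
`g x - x = (1 - x)(4x - 1)(2x - 1) / D(x)` and `1 - g x = (1 - x)(1 - (4x - 1)(2x - 1) / D(x))`
with `D(x) = 8x² - 4x + 5 ∈ (0, 9]`. Along an orbit starting at `F > 1/2` the factor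
`(4x - 1)(2x - 1) / D(x)` stays at least `(4F - 1)(2F - 1) / 9 > 0`, so the distance to `1`
shrinks geometrically.
-/

open Set Filter Topology

theorem exists_le_iterate_of_sub_le_mul {f : ℝ → ℝ} {s : Set ℝ} {p c : ℝ}
    (hs : MapsTo f s s) (hc₀ : 0 ≤ c) (hc₁ : c < 1) (hf : ∀ x ∈ s, p - f x ≤ c * (p - x))
    {x : ℝ} (hx : x ∈ s) {y : ℝ} (hy : y < p) : ∃ N : ℕ, y ≤ f^[N] x := by
  have hbound : ∀ n : ℕ, p - f^[n] x ≤ c ^ n * (p - x) := by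
    intro n
    induction n with
    | zero => simp
    | succ n ih =>
      calc p - f^[n + 1] x = p - f (f^[n] x) := by rw [Function.iterate_succ_apply']
        _ ≤ c * (p - f^[n] x) := hf _ (hs.iterate n hx)
        _ ≤ c * (c ^ n * (p - x)) := mul_le_mul_of_nonneg_left ih hc₀
        _ = c ^ (n + 1) * (p - x) := by ring
  have hlim : Tendsto (fun n : ℕ => c ^ n * (p - x)) atTop (𝓝 0) := by
    simpa using (tendsto_pow_atTop_nhds_zero_of_lt_one hc₀ hc₁).mul_const (p - x)
  obtain ⟨N, hN⟩ := (hlim.eventually (gt_mem_nhds (sub_pos.2 hy))).exists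
  exact ⟨N, by linarith [hbound N]⟩

lemma g_denom_pos (x : ℝ) : 0 < 8 * x ^ 2 - 4 * x + 5 := by
  nlinarith [sq_nonneg (4 * x - 1)]

lemma g_sub_self (x : ℝ) :
    g x - x = (1 - x) * ((4 * x - 1) * (2 * x - 1)) / (8 * x ^ 2 - 4 * x + 5) := by
  rw [g, eq_div_iff (g_denom_pos x).ne', sub_mul, div_mul_cancel₀ _ (g_denom_pos x).ne']
  ring

lemma one_sub_g (x : ℝ) :
    1 - g x = (1 - x) * (1 - (4 * x - 1) * (2 * x - 1) / (8 * x ^ 2 - 4 * x + 5)) := by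
  have hD := (g_denom_pos x).ne'
  rw [g, one_sub_div hD, one_sub_div hD, ← mul_div_assoc]
  congr 1
  ring

lemma mapsTo_g_Ico {a : ℝ} (ha : 1 / 2 ≤ a) : MapsTo g (Ico a 1) (Ico a 1) := by
  rintro x ⟨hax, hx1⟩
  have hD := g_denom_pos x
  have hgx : x ≤ g x := by
    have : 0 ≤ g x - x := by
      rw [g_sub_self]
      exact div_nonneg (mul_nonneg (by linarith) (mul_nonneg (by linarith) (by linarith))) hD.le
    linarith
  have hg1 : g x < 1 := by
    have : 0 < 1 - g x := by
      rw [one_sub_g, one_sub_div hD.ne']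
      exact mul_pos (by linarith) (div_pos (by nlinarith) hD)
    linarith
  exact ⟨hax.trans hgx, hg1⟩

lemma one_sub_g_le {a x : ℝ} (ha : 1 / 2 ≤ a) (hx : x ∈ Ico a 1) :
    1 - g x ≤ (1 - (4 * a - 1) * (2 * a - 1) / 9) * (1 - x) := by
  obtain ⟨hax, hx1⟩ := hx
  have hD := g_denom_pos x
  have hD9 : 8 * x ^ 2 - 4 * x + 5 ≤ 9 := by nlinarith
  have hqa : 0 ≤ (4 * a - 1) * (2 * a - 1) := mul_nonneg (by linarith) (by linarith)
  have hq : (4 * a - 1) * (2 * a - 1) ≤ (4 * x - 1) * (2 * x - 1) := by nlinarith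
  have hratio : (4 * a - 1) * (2 * a - 1) / 9 ≤
      (4 * x - 1) * (2 * x - 1) / (8 * x ^ 2 - 4 * x + 5) :=
    calc (4 * a - 1) * (2 * a - 1) / 9
        ≤ (4 * a - 1) * (2 * a - 1) / (8 * x ^ 2 - 4 * x + 5) :=
          div_le_div_of_nonneg_left hqa hD hD9
      _ ≤ (4 * x - 1) * (2 * x - 1) / (8 * x ^ 2 - 4 * x + 5) := by gcongr
  rw [one_sub_g, mul_comm]
  exact mul_le_mul_of_nonneg_right (by linarith) (by linarith)

theorem recurrence_reaches_target (F Ft : ℝ) (h1 : 1 / 2 < F) (h2 : F < 1) (hFt : Ft < 1) :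
    ∃ N : ℕ, Ft ≤ g^[N] F := by
  have hq₀ : 0 < (4 * F - 1) * (2 * F - 1) := mul_pos (by linarith) (by linarith)
  have hq₃ : (4 * F - 1) * (2 * F - 1) < 9 := by nlinarith
  exact exists_le_iterate_of_sub_le_mul (mapsTo_g_Ico h1.le)
    (by linarith : 0 ≤ 1 - (4 * F - 1) * (2 * F - 1) / 9) (by linarith)
    (fun x hx => one_sub_g_le h1.le hx) ⟨le_rfl, h2⟩ hFt
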